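/- Let δ > 0 and define V(y_1, y_2) = (1/y_1) Φ( log(y_2/y_1)/√(2δ) + √(δ/2) ) + (1/y_2) Φ( log(y_1/y_2)/√(2δ) + √(δ/2) ) for y_1, y_2 > 0, where Φ is the standard normal distribution function. Then the tail dependence coefficient of the bivariate distribution G(y_1,y_2) = exp(-V(y_1,y_2)) equals 2(1 - Φ(√(δ/2))): precisely, lim_{y → ∞} ( 1 - 2 e^{-1/y} + e^{-V(y,y)} ) / ( 1 - e^{-1/y} ) = 2 ( 1 - Φ( √(δ/2) ) ). (The left-hand ratio equals P(X > y, Y > y)/P(Y > y) for a random pair (X,Y) with joint distribution function G and standard Fréchet margins.) -/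

import Mathlib

/-- The standard normal distribution function `Φ(x) = ∫_{-∞}^x (2π)^{-1/2} e^{-t²/2} dt`. -/
noncomputable def stdNormalCDF (x : ℝ) : ℝ :=
  ∫ t in Set.Iic x, (Real.sqrt (2 * Real.pi))⁻¹ * Real.exp (-t ^ 2 / 2)

/-- The bivariate Hüsler–Reiss exponent measure with dependence parameter `δ`:
`V(y₁,y₂) = (1/y₁) Φ(log(y₂/y₁)/√(2δ) + √(δ/2)) + (1/y₂) Φ(log(y₁/y₂)/√(2δ) + √(δ/2))`. -/
noncomputable def huslerReissV (δ y₁ y₂ : ℝ) : ℝ :=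
  (1 / y₁) * stdNormalCDF (Real.log (y₂ / y₁) / Real.sqrt (2 * δ) + Real.sqrt (δ / 2))
    + (1 / y₂) * stdNormalCDF (Real.log (y₁ / y₂) / Real.sqrt (2 * δ) + Real.sqrt (δ / 2))

/-!
On the diagonal the logarithms vanish, so `V(y, y) = c / y` with `c = 2 Φ(√(δ/2))`. Substituting
`t = 1/y`, the ratio becomes `(1 - 2 e^{-t} + e^{-ct}) / (1 - e^{-t})`, a quotient of two smooth
functions vanishing at `0`; its limit as `t → 0` is the quotient of their derivatives, `(2 - c) / 1`.
-/

open Filter Topology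

theorem tendsto_div_nhdsNE_of_hasDerivAt {f g : ℝ → ℝ} {f' g' x : ℝ}
    (hf : HasDerivAt f f' x) (hg : HasDerivAt g g' x) (hfx : f x = 0) (hgx : g x = 0)
    (hg' : g' ≠ 0) : Tendsto (fun t => f t / g t) (𝓝[≠] x) (𝓝 (f' / g')) := by
  have hslope := (hasDerivAt_iff_tendsto_slope.mp hf).div (hasDerivAt_iff_tendsto_slope.mp hg) hg'
  refine hslope.congr' ?_
  filter_upwards [self_mem_nhdsWithin] with t ht
  have ht : t - x ≠ 0 := sub_ne_zero.mpr ht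
  simp only [Pi.div_apply, slope_def_field, hfx, hgx, sub_zero]
  exact div_div_div_cancel_right₀ ht _ _

theorem tendsto_tailRatio_nhdsNE_zero (c : ℝ) :
    Tendsto (fun t => (1 - 2 * Real.exp (-t) + Real.exp (-(c * t))) / (1 - Real.exp (-t)))
      (𝓝[≠] 0) (𝓝 (2 - c)) := by
  have hexp : HasDerivAt (fun t : ℝ => Real.exp (-t)) (-1) 0 := by
    simpa using (hasDerivAt_neg (0 : ℝ)).exp
  have hexp_c : HasDerivAt (fun t : ℝ => Real.exp (-(c * t))) (-c) 0 := by
    simpa using ((hasDerivAt_id (0 : ℝ)).const_mul c).neg.exp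
  have hnum : HasDerivAt (fun t => 1 - 2 * Real.exp (-t) + Real.exp (-(c * t))) (2 - c) 0 :=
    (((hexp.const_mul 2).const_sub 1).add hexp_c).congr_deriv (by ring)
  have hden : HasDerivAt (fun t => 1 - Real.exp (-t)) 1 0 := by
    simpa using hexp.const_sub 1
  simpa using tendsto_div_nhdsNE_of_hasDerivAt hnum hden (by norm_num) (by simp) one_ne_zero

theorem huslerReissV_self (δ y : ℝ) :
    huslerReissV δ y y = 2 * stdNormalCDF (Real.sqrt (δ / 2)) * (1 / y) := by
  rcases eq_or_ne y 0 with rfl | hy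
  · simp [huslerReissV]
  · rw [huslerReissV, div_self hy, Real.log_one, zero_div, zero_add]
    ring

theorem huslerReiss_tail_dependence_general (δ : ℝ) :
    Filter.Tendsto
      (fun y : ℝ =>
        (1 - 2 * Real.exp (-(1 / y)) + Real.exp (-huslerReissV δ y y)) /
          (1 - Real.exp (-(1 / y))))
      Filter.atTop (nhds (2 * (1 - stdNormalCDF (Real.sqrt (δ / 2))))) := by
  have hinv : Tendsto (fun y : ℝ => 1 / y) atTop (𝓝[≠] 0) := by
    simpa only [one_div] using tendsto_inv_atTop_nhdsGT_zero.mono_right (nhdsGT_le_nhdsNE 0)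
  have h := (tendsto_tailRatio_nhdsNE_zero (2 * stdNormalCDF (Real.sqrt (δ / 2)))).comp hinv
  simp only [Function.comp_def, ← huslerReissV_self] at h
  convert h using 2
  ring

/-- For `δ > 0`, the tail dependence coefficient of the bivariate
distribution `G(y₁,y₂) = exp(-V(y₁,y₂))` equals `2(1 - Φ(√(δ/2)))`:
`lim_{y → ∞} (1 - 2 e^{-1/y} + e^{-V(y,y)}) / (1 - e^{-1/y}) = 2(1 - Φ(√(δ/2)))`.
(The ratio is `P(X > y, Y > y)/P(Y > y)` for `(X,Y) ~ G` with standard Fréchet margins.) -/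
theorem huslerReiss_tail_dependence (δ : ℝ) (hδ : 0 < δ) :
    Filter.Tendsto
      (fun y : ℝ =>
        (1 - 2 * Real.exp (-(1 / y)) + Real.exp (-huslerReissV δ y y)) /
          (1 - Real.exp (-(1 / y))))
      Filter.atTop (nhds (2 * (1 - stdNormalCDF (Real.sqrt (δ / 2))))) :=
  huslerReiss_tail_dependence_general δ
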